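/- Let T1 ∈ ℝ^{Nx×Nx}, T2 ∈ ℝ^{Ny×Ny}, define A = I_{Ny} ⊗ T1 + T2ᵀ ⊗ I_{Nx}, assume A is invertible, and let h_t ∈ ℝ. Set E1 = exp(h_t T1) and E2 = exp(h_t T2ᵀ). Let U_n and F_n be Nx×Ny real matrices with u_n = vec(U_n), f_n = vec(F_n), and let V_n be a solution of the Sylvester equation T1 V_n + V_n T2 = E1 F_n E2ᵀ − F_n. Then the exponential Euler step u_{n+1} = exp(h_t A) u_n + A^{−1}( exp(h_t A) f_n − f_n ) satisfies u_{n+1} = vec( E1 U_n E2ᵀ + V_n ). -/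

import Mathlib

open Matrix NormedSpace
open scoped Kronecker

/-- `vec` stacks the columns of an `Nx × Ny` matrix one after the other:
the component of `vec U` at index `(j, i)` is `U i j`. -/
def vec {Nx Ny : ℕ} (U : Matrix (Fin Nx) (Fin Ny) ℝ) : Fin Ny × Fin Nx → ℝ :=
  fun p => U p.2 p.1

/-!
The Kronecker sum `A = I ⊗ T1 + T2ᵀ ⊗ I` is the sum of two commuting matrices, and `M ↦ I ⊗ M`,
`M ↦ M ⊗ I` are algebra homomorphisms, so `exp (h A) = exp (h T2ᵀ) ⊗ exp (h T1) = E2 ⊗ E1`.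
Since `(B ⊗ C) vec X = vec (C X Bᵀ)`, this gives `exp (h A) vec U = vec (E1 U E2ᵀ)`, and the
Sylvester equation says exactly `A vec V = exp (h A) vec F - vec F`, so
`A⁻¹ (exp (h A) f - f) = vec V`.
-/

theorem vec_eq_matrix_vec {Nx Ny : ℕ} (U : Matrix (Fin Nx) (Fin Ny) ℝ) :
    _root_.vec U = Matrix.vec U :=
  rfl

namespace Matrix

section Kronecker

variable {R : Type*} [CommSemiring R] {m n : Type*} [Fintype m] [DecidableEq m]
  [Fintype n] [DecidableEq n]

variable (R m n) in
def oneKroneckerAlgHom : Matrix n n R →ₐ[R] Matrix (m × n) (m × n) R where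
  toFun M := 1 ⊗ₖ M
  map_one' := one_kronecker_one
  map_mul' M N := by rw [← mul_kronecker_mul, Matrix.one_mul]
  map_zero' := kronecker_zero _
  map_add' := kronecker_add _
  commutes' r := by simp [Algebra.algebraMap_eq_smul_one, kronecker_smul]

variable (R m n) in
def kroneckerOneAlgHom : Matrix m m R →ₐ[R] Matrix (m × n) (m × n) R where
  toFun M := M ⊗ₖ 1
  map_one' := one_kronecker_one
  map_mul' M N := by rw [← mul_kronecker_mul, Matrix.one_mul]
  map_zero' := zero_kronecker _
  map_add' M N := add_kronecker _ _ _
  commutes' r := by simp [Algebra.algebraMap_eq_smul_one, smul_kronecker]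

theorem commute_one_kronecker_kronecker_one (A : Matrix n n R) (B : Matrix m m R) :
    Commute (1 ⊗ₖ A) (B ⊗ₖ 1) := by
  rw [Commute, SemiconjBy, ← mul_kronecker_mul, ← mul_kronecker_mul, Matrix.one_mul,
    Matrix.mul_one, Matrix.one_mul, Matrix.mul_one]

theorem kroneckerSum_mulVec_vec (A : Matrix n n R) (B : Matrix m m R) (X : Matrix n m R) :
    (1 ⊗ₖ A + Bᵀ ⊗ₖ 1) *ᵥ vec X = vec (A * X + X * B) := by
  rw [add_mulVec, kronecker_mulVec_vec, kronecker_mulVec_vec, vec_add, transpose_one,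
    Matrix.mul_one, transpose_transpose, Matrix.one_mul]

end Kronecker

section Exp

variable {𝕜 : Type*} [RCLike 𝕜] {m n : Type*} [Fintype m] [DecidableEq m]
  [Fintype n] [DecidableEq n]

theorem map_exp_of_algHom (f : Matrix m m 𝕜 →ₐ[𝕜] Matrix n n 𝕜) (M : Matrix m m 𝕜) :
    f (exp M) = exp (f M) := by
  -- matrices carry no global norm; any submultiplicative one serves `map_exp`
  let := Matrix.linftyOpNormedRing (n := m) (α := 𝕜)
  let := Matrix.linftyOpNormedRing (n := n) (α := 𝕜)
  let := Matrix.linftyOpNormedAlgebra (R := ℚ) (n := m) (α := 𝕜)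
  let := Matrix.linftyOpNormedAlgebra (R := 𝕜) (n := m) (α := 𝕜)
  -- instance search does not identify the `linfty` uniformity with the product one
  have : @CompleteSpace (Matrix m m 𝕜) PseudoMetricSpace.toUniformSpace :=
    FiniteDimensional.complete 𝕜 _
  exact map_exp f f.toLinearMap.continuous_of_finiteDimensional M

theorem exp_one_kronecker (M : Matrix n n 𝕜) :
    exp ((1 : Matrix m m 𝕜) ⊗ₖ M) = 1 ⊗ₖ exp M :=
  (map_exp_of_algHom (oneKroneckerAlgHom 𝕜 m n) M).symm

theorem exp_kronecker_one (M : Matrix m m 𝕜) :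
    exp (M ⊗ₖ (1 : Matrix n n 𝕜)) = exp M ⊗ₖ 1 :=
  (map_exp_of_algHom (kroneckerOneAlgHom 𝕜 m n) M).symm

theorem exp_kroneckerSum (A : Matrix n n 𝕜) (B : Matrix m m 𝕜) :
    exp (1 ⊗ₖ A + B ⊗ₖ 1) = exp B ⊗ₖ exp A := by
  rw [exp_add_of_commute _ _ (commute_one_kronecker_kronecker_one A B), exp_one_kronecker,
    exp_kronecker_one, ← mul_kronecker_mul, Matrix.one_mul, Matrix.mul_one]

end Exp

end Matrix

/-- With `A = I ⊗ T1 + T2ᵀ ⊗ I` invertible, `E1 = exp(h_t T1)`, `E2 = exp(h_t T2ᵀ)`,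
and `V_n` a solution of the Sylvester equation `T1 V_n + V_n T2 = E1 F_n E2ᵀ − F_n`,
the exponential Euler step `u_{n+1} = exp(h_t A) u_n + A⁻¹(exp(h_t A) f_n − f_n)`
satisfies `u_{n+1} = vec(E1 U_n E2ᵀ + V_n)`. -/
theorem expEuler_step_matrix_form {Nx Ny : ℕ}
    (T1 : Matrix (Fin Nx) (Fin Nx) ℝ) (T2 : Matrix (Fin Ny) (Fin Ny) ℝ)
    (A : Matrix (Fin Ny × Fin Nx) (Fin Ny × Fin Nx) ℝ)
    (hA : A = (1 : Matrix (Fin Ny) (Fin Ny) ℝ) ⊗ₖ T1 + T2ᵀ ⊗ₖ (1 : Matrix (Fin Nx) (Fin Nx) ℝ))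
    (hAinv : IsUnit A.det) (ht : ℝ)
    (E1 : Matrix (Fin Nx) (Fin Nx) ℝ) (hE1 : E1 = exp (ht • T1))
    (E2 : Matrix (Fin Ny) (Fin Ny) ℝ) (hE2 : E2 = exp (ht • T2ᵀ))
    (Un Fn Vn : Matrix (Fin Nx) (Fin Ny) ℝ)
    (un fn : Fin Ny × Fin Nx → ℝ) (hun : un = _root_.vec Un) (hfn : fn = _root_.vec Fn)
    (hVn : T1 * Vn + Vn * T2 = E1 * Fn * E2ᵀ - Fn)
    (unp1 : Fin Ny × Fin Nx → ℝ)
    (hstep : unp1 = (exp (ht • A)).mulVec un + A⁻¹.mulVec ((exp (ht • A)).mulVec fn - fn)) :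
    unp1 = _root_.vec (E1 * Un * E2ᵀ + Vn) := by
  rw [vec_eq_matrix_vec] at hun hfn ⊢
  have hexp : exp (ht • A) = E2 ⊗ₖ E1 := by
    rw [hA, smul_add, ← kronecker_smul, ← smul_kronecker, exp_kroneckerSum, hE1, hE2]
  have hsylvester : A *ᵥ Matrix.vec Vn = exp (ht • A) *ᵥ Matrix.vec Fn - Matrix.vec Fn := by
    rw [hexp, hA, kroneckerSum_mulVec_vec, hVn, kronecker_mulVec_vec, vec_sub]
  rw [hstep, hun, hfn, ← hsylvester, mulVec_mulVec, nonsing_inv_mul A hAinv, one_mulVec, hexp,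
    kronecker_mulVec_vec, vec_add]
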